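/- arXiv:1811.11696 — 4 statements merged into one kernel-verified Lean document; each statement's English description precedes it below -/
import Mathlib

section
/- Let k be a field of characteristic ≠ 2, V a finite-dimensional k-vector space, and Q a quadratic form on V with polar bilinear form b. Then the Jacobson radical of the Clifford algebra C(Q) equals the two-sided ideal of C(Q) generated by ι(rad(b)), the image under the canonical linear map ι : V → C(Q) of the radical rad(b) of b. -/
/-!
If `r ∈ rad b` then `ι r * u = involute u * ι r` for every `u` and `ι r * ι r = Q r = 0`, so
`ι r * y * ι r = 0` for all `y`. Hence every `y * ι r` is square-zero and `ι r` lies in the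
Jacobson radical, which is a two-sided ideal.

Conversely, let `W` be a complement of `rad b`, so that `Q|_W` is nondegenerate. The projection
`V → W` along `rad b` preserves `Q`; it induces a surjection `C(Q) → C(Q|_W)` which, followed by
the inclusion `C(Q|_W) → C(Q)`, changes an element only modulo the ideal generated by `ι(rad b)`.
Surjections map Jacobson radicals into Jacobson radicals, so it remains to see that `C(Q)` has zero
Jacobson radical when `Q` is nondegenerate. Then every contraction `d ⌋ u` has the form
`ι x * u - involute u * ι x`, so the Jacobson radical is stable under contractions. Transported to
the exterior algebra by `equivExterior`, a nonzero contraction-stable subspace contains `1`: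
contracting by the basis vectors of a monomial of maximal degree turns a nonzero element into a
nonzero scalar.
-/

theorem Ring.mem_jacobson_of_forall_mul_mul_eq_zero {R : Type*} [Ring R] {x : R}
    (h : ∀ y, x * y * x = 0) : x ∈ Ring.jacobson R := by
  rw [← Ideal.jacobson_bot, Ideal.mem_jacobson_iff]
  intro y
  -- `y * x` squares to zero, so `1 - y * x` inverts `1 + y * x`
  refine ⟨1 - y * x, Ideal.mem_bot.2 ?_⟩
  have hyx : y * x * (y * x) = 0 := by
    rw [← mul_assoc, mul_assoc y x y, mul_assoc y, h, mul_zero]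
  calc (1 - y * x) * y * x + (1 - y * x) - 1 = -(y * x * (y * x)) := by noncomm_ring
    _ = 0 := by rw [hyx, neg_zero]

theorem Ring.map_mem_jacobson_of_surjective {R S : Type*} [Ring R] [Ring S] (f : R →+* S)
    (hf : Function.Surjective f) {x : R} (hx : x ∈ Ring.jacobson R) : f x ∈ Ring.jacobson S :=
  have : RingHomSurjective f := ⟨hf⟩
  Ring.le_comap_jacobson f hx

namespace QuadraticMap

variable {R M : Type*} [CommRing R] [AddCommGroup M] [Module R M] [Invertible (2 : R)]
  {Q : QuadraticForm R M}

theorem apply_eq_zero_of_mem_ker_polarBilin {x : M} (hx : x ∈ LinearMap.ker Q.polarBilin) :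
    Q x = 0 := by
  have h2 : (2 : R) * Q x = 0 := by
    rw [two_mul, ← two_nsmul, ← polar_self, ← polarBilin_apply_apply, LinearMap.mem_ker.1 hx,
      LinearMap.zero_apply]
  exact (isUnit_of_invertible (2 : R)).mul_right_eq_zero.1 h2

theorem apply_projection_of_isCompl_ker {W : Submodule R M}
    (hW : IsCompl W (LinearMap.ker Q.polarBilin)) (x : M) : Q (W.projection _ hW x) = Q x := by
  set p := W.projection _ hW x
  have hr : x - p ∈ LinearMap.ker Q.polarBilin := W.sub_projection_mem hW x
  have hpolar : polar Q p (x - p) = 0 := by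
    rw [polar_comm, ← polarBilin_apply_apply, LinearMap.mem_ker.1 hr, LinearMap.zero_apply]
  rw [polar, add_sub_cancel, apply_eq_zero_of_mem_ker_polarBilin hr, sub_zero,
    sub_eq_zero] at hpolar
  exact hpolar.symm

end QuadraticMap

theorem QuadraticMap.polarBilin_comp_subtype_surjective {K V : Type*} [Field K]
    [AddCommGroup V] [Module K V] [FiniteDimensional K V] {Q : QuadraticForm K V}
    {W : Submodule K V} (hW : IsCompl W (LinearMap.ker Q.polarBilin)) :
    Function.Surjective (Q.comp W.subtype).polarBilin := by
  have h := LinearMap.IsSymm.nondegenerate_restrict_of_isCompl_ker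
    ⟨fun x y => QuadraticMap.polar_comm Q x y⟩ hW
  rw [QuadraticMap.polarBilin_comp]
  exact (LinearMap.BilinForm.toDual _ h).surjective

def QuadraticMap.Isometry.subtype {R M N : Type*} [CommSemiring R] [AddCommMonoid M]
    [AddCommMonoid N] [Module R M] [Module R N] (Q : QuadraticMap R M N) (W : Submodule R M) :
    Q.comp W.subtype →qᵢ Q :=
  ⟨W.subtype, fun _ => rfl⟩

@[simp] theorem QuadraticMap.Isometry.subtype_apply {R M N : Type*} [CommSemiring R]
    [AddCommMonoid M] [AddCommMonoid N] [Module R M] [Module R N] (Q : QuadraticMap R M N)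
    (W : Submodule R M) (w : W) : QuadraticMap.Isometry.subtype Q W w = w :=
  rfl

namespace ExteriorAlgebra

open CliffordAlgebra (contractLeft contractLeft_ι_mul contractLeft_one)

section CommRing

variable {R M : Type*} [CommRing R] [AddCommGroup M] [Module R M]

def contractLeftList : List (Module.Dual R M) → ExteriorAlgebra R M →ₗ[R] ExteriorAlgebra R M
  | [] => LinearMap.id
  | d :: ds => contractLeftList ds ∘ₗ contractLeft d

@[simp] lemma contractLeftList_cons (d : Module.Dual R M) (ds : List (Module.Dual R M))
    (w : ExteriorAlgebra R M) :
    contractLeftList (d :: ds) w = contractLeftList ds (contractLeft d w) :=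
  rfl

lemma contractLeftList_mem {S : Submodule R (ExteriorAlgebra R M)}
    (hS : ∀ d, ∀ w ∈ S, contractLeft d w ∈ S) :
    ∀ (ds : List (Module.Dual R M)) {w}, w ∈ S → contractLeftList ds w ∈ S
  | [], _, hw => hw
  | d :: ds, _, hw => contractLeftList_mem hS ds (hS d _ hw)

variable {I : Type*} (b : Module.Basis I R M)

lemma contractLeft_coord_prod_of_notMem {i : I} {l : List I} (hi : i ∉ l) :
    contractLeft (b.coord i) (l.map fun j => ι R (b j)).prod = 0 := by
  classical
  induction l with
  | nil => exact contractLeft_one (Q := 0) (b.coord i)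
  | cons j l ih =>
    rw [List.mem_cons, not_or] at hi
    rw [List.map_cons, List.prod_cons, contractLeft_ι_mul, ih hi.2, Module.Basis.coord_apply,
      b.repr_self_apply, if_neg (Ne.symm hi.1), zero_smul, mul_zero, sub_zero]

lemma contractLeft_coord_prod_cons {i : I} {l : List I} (hi : i ∉ l) :
    contractLeft (b.coord i) ((i :: l).map fun j => ι R (b j)).prod =
      (l.map fun j => ι R (b j)).prod := by
  classical
  rw [List.map_cons, List.prod_cons, contractLeft_ι_mul, contractLeft_coord_prod_of_notMem b hi,
    Module.Basis.coord_apply, b.repr_self_apply, if_pos rfl, one_smul, mul_zero, sub_zero]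

lemma contractLeft_coord_prod_mem_span [DecidableEq I] (i : I) {l : List I} (hl : l.Nodup) :
    contractLeft (b.coord i) (l.map fun j => ι R (b j)).prod ∈
      R ∙ ((l.erase i).map fun j => ι R (b j)).prod := by
  induction l with
  | nil => simp [contractLeft_one]
  | cons j l ih =>
    rw [List.nodup_cons] at hl
    by_cases hij : j = i
    · subst hij
      rw [contractLeft_coord_prod_cons b hl.1, List.erase_cons_head]
      exact Submodule.mem_span_singleton_self _
    · obtain ⟨a, ha⟩ := Submodule.mem_span_singleton.1 (ih hl.2)
      refine Submodule.mem_span_singleton.2 ⟨-a, ?_⟩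
      rw [List.erase_cons_tail (by simpa using hij), List.map_cons, List.prod_cons, List.map_cons,
        List.prod_cons, contractLeft_ι_mul, ← ha, Module.Basis.coord_apply, b.repr_self_apply,
        if_neg hij, zero_smul, zero_sub, mul_smul_comm, neg_smul]

lemma contractLeftList_prod_of_not_subset [DecidableEq I] :
    ∀ (t : List I) {l : List I}, l.Nodup → ¬ t ⊆ l →
      contractLeftList (t.map b.coord) (l.map fun j => ι R (b j)).prod = 0
  | [], _, _, h => absurd (List.nil_subset _) h
  | i :: t, l, hl, h => by
    rw [List.map_cons, contractLeftList_cons]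
    by_cases hi : i ∈ l
    · obtain ⟨a, ha⟩ :=
        Submodule.mem_span_singleton.1 (contractLeft_coord_prod_mem_span b i hl)
      have ht : ¬ t ⊆ l.erase i := fun ht =>
        h (List.cons_subset.2 ⟨hi, fun x hx => List.erase_subset (ht hx)⟩)
      rw [← ha, map_smul, contractLeftList_prod_of_not_subset t (hl.erase i) ht, smul_zero]
    · rw [contractLeft_coord_prod_of_notMem b hi, map_zero]

lemma contractLeftList_prod_self :
    ∀ {t : List I}, t.Nodup →
      contractLeftList (t.map b.coord) (t.map fun j => ι R (b j)).prod = 1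
  | [], _ => rfl
  | i :: t, ht => by
    rw [List.nodup_cons] at ht
    rw [List.map_cons, contractLeftList_cons, contractLeft_coord_prod_cons b ht.1,
      contractLeftList_prod_self ht.2]

lemma basis_eq_prod_sort [LinearOrder I] (s : Finset I) :
    b.ExteriorAlgebra s = ((s.sort (· ≤ ·)).map fun i => ι R (b i)).prod := by
  simp only [basis_apply, Set.powersetCard.prodEquiv_symm_apply, ιMulti_apply,
    Set.powersetCard.ofFinEmbEquiv_symm_apply]
  congr 1
  apply List.ext_getElem <;> simp [Finset.orderEmbOfFin_apply]

end CommRing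

theorem one_mem_of_forall_contractLeft_mem {K M : Type*} [Field K] [AddCommGroup M]
    [Module K M] {S : Submodule K (ExteriorAlgebra K M)}
    (hS : ∀ d, ∀ w ∈ S, contractLeft d w ∈ S) (hS₀ : S ≠ ⊥) : 1 ∈ S := by
  classical
  let _ := IsWellOrder.linearOrder (WellOrderingRel (α := Module.Basis.ofVectorSpaceIndex K M))
  set b := Module.Basis.ofVectorSpace K M
  obtain ⟨w, hwS, hw₀⟩ := Submodule.exists_mem_ne_zero_of_ne_bot hS₀
  set c := (b.ExteriorAlgebra).repr w
  have hc : c.support.Nonempty := Finsupp.support_nonempty_iff.2 (by simpa [c] using hw₀)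
  obtain ⟨T, hT, hTmax⟩ := c.support.exists_max_image Finset.card hc
  set t := T.sort (· ≤ ·)
  have hkey : contractLeftList (t.map b.coord) w = c T • 1 := by
    conv_lhs =>
      rw [← (b.ExteriorAlgebra).linearCombination_repr w, Finsupp.linearCombination_apply]
    rw [map_finsuppSum, Finsupp.sum, Finset.sum_eq_single T]
    · rw [map_smul, basis_eq_prod_sort, contractLeftList_prod_self b (T.sort_nodup _)]
    · intro s hs hsT
      rw [map_smul, basis_eq_prod_sort, contractLeftList_prod_of_not_subset b t (s.sort_nodup _),
        smul_zero]
      intro hts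
      refine hsT (Finset.eq_of_subset_of_card_le (fun x hx => ?_) (hTmax s hs)).symm
      simpa [t] using hts (by simpa [t] using hx)
    · intro h; exact absurd hT h
  have hmem := contractLeftList_mem hS (t.map b.coord) hwS
  rwa [hkey, Submodule.smul_mem_iff _ (Finsupp.mem_support_iff.1 hT)] at hmem

end ExteriorAlgebra

namespace CliffordAlgebra

section CommRing

variable {R M : Type*} [CommRing R] [AddCommGroup M] [Module R M] {Q : QuadraticForm R M}

theorem contractLeft_mul (d : Module.Dual R M) (u v : CliffordAlgebra Q) :
    contractLeft d (u * v) = contractLeft d u * v + involute u * contractLeft d v := by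
  induction u using CliffordAlgebra.induction generalizing v with
  | algebraMap r =>
    rw [contractLeft_algebraMap, zero_mul, zero_add, AlgHom.commutes, ← Algebra.smul_def,
      ← Algebra.smul_def, map_smul]
  | ι x =>
    rw [contractLeft_ι_mul, contractLeft_ι, involute_ι, ← Algebra.smul_def, neg_mul,
      sub_eq_add_neg]
  | mul u w ihu ihw =>
    rw [mul_assoc, ihu, ihw, ihu, map_mul]
    noncomm_ring
  | add u w ihu ihw =>
    rw [add_mul, map_add, map_add, ihu, ihw, map_add, add_mul, add_mul]
    abel

theorem ι_mul_sub_involute_mul_ι (x : M) (u : CliffordAlgebra Q) :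
    ι Q x * u - involute u * ι Q x = contractLeft (Q.polarBilin x) u := by
  induction u using CliffordAlgebra.induction with
  | algebraMap r =>
    rw [contractLeft_algebraMap, AlgHom.commutes, ← Algebra.commutes r (ι Q x), sub_self]
  | ι y =>
    rw [involute_ι, contractLeft_ι, neg_mul, sub_neg_eq_add, ι_mul_ι_add_swap]
    rfl
  | mul u v ihu ihv =>
    rw [contractLeft_mul, ← ihu, ← ihv, map_mul]
    noncomm_ring
  | add u v ihu ihv =>
    rw [map_add, map_add, mul_add, add_mul, ← ihu, ← ihv]
    abel

theorem ι_mul_eq_involute_mul_ι {x : M} (hx : x ∈ LinearMap.ker Q.polarBilin)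
    (u : CliffordAlgebra Q) : ι Q x * u = involute u * ι Q x := by
  rw [← sub_eq_zero, ι_mul_sub_involute_mul_ι, LinearMap.mem_ker.1 hx, map_zero,
    LinearMap.zero_apply]

theorem ι_mul_mul_ι_eq_zero [Invertible (2 : R)] {x : M} (hx : x ∈ LinearMap.ker Q.polarBilin)
    (u : CliffordAlgebra Q) : ι Q x * u * ι Q x = 0 := by
  rw [ι_mul_eq_involute_mul_ι hx, mul_assoc, ι_sq_scalar,
    QuadraticMap.apply_eq_zero_of_mem_ker_polarBilin hx, map_zero, mul_zero]

theorem ι_mem_jacobson [Invertible (2 : R)] {x : M} (hx : x ∈ LinearMap.ker Q.polarBilin) :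
    ι Q x ∈ Ring.jacobson (CliffordAlgebra Q) :=
  Ring.mem_jacobson_of_forall_mul_mul_eq_zero (ι_mul_mul_ι_eq_zero hx)

theorem contractLeft_polarBilin_mem_jacobson (x : M) {u : CliffordAlgebra Q}
    (hu : u ∈ Ring.jacobson (CliffordAlgebra Q)) :
    contractLeft (Q.polarBilin x) u ∈ Ring.jacobson (CliffordAlgebra Q) := by
  rw [← ι_mul_sub_involute_mul_ι]
  exact sub_mem (Ideal.mul_mem_left _ _ hu) (Ideal.mul_mem_right _ _
    (Ring.map_mem_jacobson_of_surjective involute.toRingHom involute_involutive.surjective hu))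

end CommRing

section Field

variable {K M : Type*} [Field K] [AddCommGroup M] [Module K M] [Invertible (2 : K)]
  {Q : QuadraticForm K M}

theorem one_mem_of_forall_contractLeft_mem {S : Submodule K (CliffordAlgebra Q)}
    (hS : ∀ d, ∀ u ∈ S, contractLeft d u ∈ S) (hS₀ : S ≠ ⊥) : 1 ∈ S := by
  obtain ⟨u, hu, hu1⟩ := ExteriorAlgebra.one_mem_of_forall_contractLeft_mem
    (S := S.map (equivExterior Q).toLinearMap)
    (by
      rintro d _ ⟨u, hu, rfl⟩
      exact ⟨_, hS d u hu,
        by exact changeForm_contractLeft changeForm.associated_neg_proof d u⟩)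
    (by rwa [Ne, Submodule.map_eq_bot_iff])
  rwa [← (equivExterior Q).injective
    (hu1.trans (changeForm_one changeForm.associated_neg_proof).symm)]

theorem jacobson_eq_bot_of_polarBilin_surjective (hQ : Function.Surjective Q.polarBilin) :
    Ring.jacobson (CliffordAlgebra Q) = ⊥ := by
  by_contra hJ
  have h1 := one_mem_of_forall_contractLeft_mem
    (S := (Ring.jacobson (CliffordAlgebra Q)).restrictScalars K)
    (fun d u hu => by
      obtain ⟨x, rfl⟩ := hQ d
      exact contractLeft_polarBilin_mem_jacobson x hu)
    (by simpa using hJ)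
  exact (Ring.jacobson_lt_top (CliffordAlgebra Q)).ne ((Ideal.eq_top_iff_one _).2 h1)

end Field

section Complement

variable {R M : Type*} [CommRing R] [AddCommGroup M] [Module R M] [Invertible (2 : R)]
  {Q : QuadraticForm R M} {W : Submodule R M} (hW : IsCompl W (LinearMap.ker Q.polarBilin))

noncomputable def toComplement : CliffordAlgebra Q →ₐ[R] CliffordAlgebra (Q.comp W.subtype) :=
  lift Q ⟨ι _ ∘ₗ W.projectionOnto _ hW, fun x => by
    rw [LinearMap.comp_apply, ι_sq_scalar, QuadraticMap.comp_apply, Submodule.subtype_apply,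
      Submodule.coe_projectionOnto_apply, QuadraticMap.apply_projection_of_isCompl_ker hW]⟩

theorem toComplement_ι (x : M) :
    toComplement hW (ι Q x) = ι (Q.comp W.subtype) (W.projectionOnto _ hW x) :=
  lift_ι_apply _ _ _

theorem toComplement_comp_map_subtype :
    (toComplement hW).comp (map (QuadraticMap.Isometry.subtype Q W)) = AlgHom.id R _ := by
  ext w
  simp [toComplement_ι]

theorem toComplement_surjective : Function.Surjective (toComplement hW) :=
  fun w => ⟨_, AlgHom.congr_fun (toComplement_comp_map_subtype hW) w⟩

theorem sub_map_toComplement_mem (u : CliffordAlgebra Q) :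
    u - map (QuadraticMap.Isometry.subtype Q W) (toComplement hW u) ∈
      TwoSidedIdeal.span (ι Q '' LinearMap.ker Q.polarBilin) := by
  set I := TwoSidedIdeal.span (ι Q '' LinearMap.ker Q.polarBilin)
  set g := (map (QuadraticMap.Isometry.subtype Q W)).comp (toComplement hW)
  change u - g u ∈ I
  induction u using CliffordAlgebra.induction with
  | algebraMap r => rw [AlgHom.commutes, sub_self]; exact I.zero_mem
  | ι x =>
    refine TwoSidedIdeal.subset_span ⟨_, W.sub_projection_mem hW x, ?_⟩
    rw [map_sub, AlgHom.comp_apply, toComplement_ι, map_apply_ι,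
      QuadraticMap.Isometry.subtype_apply, Submodule.coe_projectionOnto_apply]
  | mul u v hu hv =>
    have h : u * v - g (u * v) = (u - g u) * v + g u * (v - g v) := by
      rw [map_mul]; noncomm_ring
    rw [h]
    exact I.add_mem (I.mul_mem_right _ _ hu) (I.mul_mem_left _ _ hv)
  | add u v hu hv =>
    rw [map_add, add_sub_add_comm]
    exact I.add_mem hu hv

end Complement

end CliffordAlgebra

/-- Let `k` be a field of characteristic ≠ 2, `V` a finite-dimensional
`k`-vector space, and `Q` a quadratic form on `V` with polar bilinear form `b`.  Then the
Jacobson radical of the Clifford algebra `C(Q)` (the intersection of its maximal left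
ideals) equals the two-sided ideal of `C(Q)` generated by `ι(rad b)`. -/
theorem stmt0 {k V : Type*} [Field k] [AddCommGroup V] [Module k V]
    [FiniteDimensional k V] (h2 : (2 : k) ≠ 0) (Q : QuadraticForm k V) :
    (((⊥ : Ideal (CliffordAlgebra Q)).jacobson : Ideal (CliffordAlgebra Q)) :
        Set (CliffordAlgebra Q)) =
      ((TwoSidedIdeal.span
          (⇑(CliffordAlgebra.ι Q) '' (LinearMap.ker Q.polarBilin : Set V))) :
        Set (CliffordAlgebra Q)) := by
  have := invertibleOfNonzero h2
  obtain ⟨W, hW⟩ := (LinearMap.ker Q.polarBilin).exists_isCompl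
  replace hW := hW.symm
  rw [Ideal.jacobson_bot]
  refine Set.Subset.antisymm (fun u hu => ?_) (fun u hu => ?_)
  · have hu' : CliffordAlgebra.toComplement hW u = 0 := by
      rw [← Ideal.mem_bot, ← CliffordAlgebra.jacobson_eq_bot_of_polarBilin_surjective
        (QuadraticMap.polarBilin_comp_subtype_surjective hW)]
      exact Ring.map_mem_jacobson_of_surjective _ (CliffordAlgebra.toComplement_surjective hW) hu
    simpa [hu'] using CliffordAlgebra.sub_map_toComplement_mem hW u
  · refine Ideal.mem_toTwoSided.1 (TwoSidedIdeal.span_le.2 ?_ hu)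
    rintro _ ⟨x, hx, rfl⟩
    exact Ideal.mem_toTwoSided.2 (CliffordAlgebra.ι_mem_jacobson hx)
end

section
/- Let k be a field of characteristic ≠ 2, V a finite-dimensional k-vector space, Q a quadratic form on V with polar bilinear form b, and let W be any linear complement of rad(b) in V. Then the quotient of the Clifford algebra C(Q) by the two-sided ideal generated by ι(rad(b)) is isomorphic, as a k-algebra, to the Clifford algebra C(Q|_W) of the restriction of Q to W. -/
/-!
Split `V = rad b ⊕ W`. In characteristic `≠ 2` the form vanishes on `rad b`, so `Q` factors
through the projection `p : V → W`, and `ι ∘ p` lifts to a surjection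
`φ : C(Q) → C(Q|_W)` with section `ψ` induced by `W ↪ V`. Each generator satisfies
`ι v - ψ (φ (ι v)) = ι (v - p v)` with `v - p v ∈ rad b`, and since `x ↦ x - ψ (φ x)` respects
products modulo the ideal, `x - ψ (φ x)` lies in the ideal generated by `ι (rad b)` for every
`x`; this gives `ker φ`.
-/

namespace QuadraticMap

variable {R M N : Type*} [CommRing R] [AddCommGroup M] [Module R M] [AddCommGroup N]
  [Module R N]

theorem map_add_of_mem_ker_polarBilin (Q : QuadraticMap R M N) {x : M}
    (hx : x ∈ LinearMap.ker Q.polarBilin) (y : M) : Q (x + y) = Q x + Q y := by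
  have hxy : polar Q x y = 0 := LinearMap.congr_fun (LinearMap.mem_ker.mp hx) y
  rw [QuadraticMap.map_add (⇑Q) x y, hxy, add_zero]

theorem map_eq_zero_of_mem_ker_polarBilin [NoZeroDivisors R] (h2 : (2 : R) ≠ 0)
    (Q : QuadraticForm R M) {x : M} (hx : x ∈ LinearMap.ker Q.polarBilin) : Q x = 0 := by
  have hxx : polar Q x x = 0 := LinearMap.congr_fun (LinearMap.mem_ker.mp hx) x
  rw [polar_self, nsmul_eq_mul, Nat.cast_ofNat] at hxx
  exact (mul_eq_zero.mp hxx).resolve_left h2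

theorem map_projectionOnto {Q : QuadraticMap R M N} {K W : Submodule R M} (hKW : IsCompl K W)
    (hQ : ∀ k ∈ K, ∀ w ∈ W, Q (k + w) = Q w) (v : M) :
    Q (W.projectionOnto K hKW.symm v) = Q v := by
  conv_rhs => rw [← Submodule.projection_add_projection_eq_self hKW v]
  rw [Submodule.coe_projectionOnto_apply, hQ _ (K.projection_apply_mem hKW v) _
    (W.projection_apply_mem hKW.symm v)]

end QuadraticMap

namespace CliffordAlgebra

variable {R M : Type*} [CommRing R] [AddCommGroup M] [Module R M] {Q : QuadraticForm R M}

noncomputable def ofSubmodule (W : Submodule R M) :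
    CliffordAlgebra (Q.comp W.subtype) →ₐ[R] CliffordAlgebra Q :=
  map ⟨W.subtype, fun _ => rfl⟩

@[simp]
theorem ofSubmodule_ι (W : Submodule R M) (w : W) :
    ofSubmodule W (ι (Q.comp W.subtype) w) = ι Q w :=
  map_apply_ι _ w

variable {K W : Submodule R M} (hKW : IsCompl K W) (hQ : ∀ k ∈ K, ∀ w ∈ W, Q (k + w) = Q w)

noncomputable def projectionOnto : CliffordAlgebra Q →ₐ[R] CliffordAlgebra (Q.comp W.subtype) :=
  lift Q ⟨ι _ ∘ₗ W.projectionOnto K hKW.symm, fun v => by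
    rw [LinearMap.comp_apply, ι_sq_scalar, QuadraticMap.comp_apply, Submodule.coe_subtype,
      QuadraticMap.map_projectionOnto hKW hQ]⟩

@[simp]
theorem projectionOnto_ι (v : M) :
    projectionOnto hKW hQ (ι Q v) = ι _ (W.projectionOnto K hKW.symm v) :=
  lift_ι_apply _ _ v

theorem projectionOnto_ofSubmodule (x : CliffordAlgebra (Q.comp W.subtype)) :
    projectionOnto hKW hQ (ofSubmodule W x) = x := by
  have hcomp : (projectionOnto hKW hQ).comp (ofSubmodule W) = AlgHom.id R _ := by
    ext w
    simp [Submodule.projectionOnto_apply_left]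
  exact AlgHom.congr_fun hcomp x

theorem projectionOnto_surjective : Function.Surjective (projectionOnto hKW hQ) :=
  Function.LeftInverse.surjective (projectionOnto_ofSubmodule hKW hQ)

theorem sub_ofSubmodule_projectionOnto_mem_span (x : CliffordAlgebra Q) :
    x - ofSubmodule W (projectionOnto hKW hQ x) ∈ TwoSidedIdeal.span (ι Q '' K) := by
  set I := TwoSidedIdeal.span (ι Q '' K)
  set θ := (ofSubmodule W).comp (projectionOnto hKW hQ)
  change x - θ x ∈ I
  induction x using CliffordAlgebra.induction with
  | algebraMap r => simp [θ]
  | ι v =>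
    refine TwoSidedIdeal.subset_span ⟨v - W.projection K hKW.symm v, ?_, ?_⟩
    · rw [← Submodule.projection_eq_self_sub_projection hKW.symm]
      exact K.projection_apply_mem hKW v
    · simp [θ, Submodule.coe_projectionOnto_apply]
  | mul a b ha hb =>
    have hsplit : a * b - θ (a * b) = a * (b - θ b) + (a - θ a) * θ b := by
      rw [map_mul]; noncomm_ring
    rw [hsplit]
    exact I.add_mem (I.mul_mem_left _ _ hb) (I.mul_mem_right _ _ ha)
  | add a b ha hb =>
    rw [map_add, add_sub_add_comm]
    exact I.add_mem ha hb

theorem mem_span_ι_image_iff (x : CliffordAlgebra Q) :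
    x ∈ TwoSidedIdeal.span (ι Q '' K) ↔ projectionOnto hKW hQ x = 0 := by
  constructor
  · intro hx
    suffices hle : TwoSidedIdeal.span (ι Q '' K) ≤ TwoSidedIdeal.ker (projectionOnto hKW hQ) from
      (TwoSidedIdeal.mem_ker _).mp (hle hx)
    rw [TwoSidedIdeal.span_le]
    rintro _ ⟨k, hk, rfl⟩
    rw [SetLike.mem_coe, TwoSidedIdeal.mem_ker, projectionOnto_ι,
      Submodule.projectionOnto_apply_of_mem_right hKW.symm hk, map_zero]
  · intro hx
    simpa [hx] using sub_ofSubmodule_projectionOnto_mem_span hKW hQ x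

end CliffordAlgebra

theorem stmt1_general {k V : Type*} [Field k] [AddCommGroup V] [Module k V]
    (h2 : (2 : k) ≠ 0) (Q : QuadraticForm k V)
    (W : Submodule k V) (hW : IsCompl (LinearMap.ker Q.polarBilin) W) :
    ∃ φ : CliffordAlgebra Q →ₐ[k] CliffordAlgebra (Q.comp W.subtype),
      Function.Surjective φ ∧
      ((RingHom.ker φ : Ideal (CliffordAlgebra Q)) : Set (CliffordAlgebra Q)) =
        ((TwoSidedIdeal.span
            (⇑(CliffordAlgebra.ι Q) '' (LinearMap.ker Q.polarBilin : Set V))) :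
          Set (CliffordAlgebra Q)) := by
  have hQ : ∀ r ∈ LinearMap.ker Q.polarBilin, ∀ w ∈ W, Q (r + w) = Q w := fun r hr w _ => by
    rw [Q.map_add_of_mem_ker_polarBilin hr, Q.map_eq_zero_of_mem_ker_polarBilin h2 hr, zero_add]
  refine ⟨CliffordAlgebra.projectionOnto hW hQ,
    CliffordAlgebra.projectionOnto_surjective hW hQ, ?_⟩
  ext x
  exact (CliffordAlgebra.mem_span_ι_image_iff hW hQ x).symm

/-- Let `k` be a field of characteristic ≠ 2, `V` a finite-dimensional
`k`-vector space, `Q` a quadratic form with polar form `b`, and `W` a linear complement of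
`rad b` in `V`.  Then the quotient of `C(Q)` by the two-sided ideal generated by
`ι(rad b)` is isomorphic as a `k`-algebra to `C(Q|_W)`; equivalently, there is a
surjective `k`-algebra homomorphism `C(Q) → C(Q|_W)` whose kernel is that two-sided
ideal. -/
theorem stmt1 {k V : Type*} [Field k] [AddCommGroup V] [Module k V]
    [FiniteDimensional k V] (h2 : (2 : k) ≠ 0) (Q : QuadraticForm k V)
    (W : Submodule k V) (hW : IsCompl (LinearMap.ker Q.polarBilin) W) :
    ∃ φ : CliffordAlgebra Q →ₐ[k] CliffordAlgebra (Q.comp W.subtype),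
      Function.Surjective φ ∧
      ((RingHom.ker φ : Ideal (CliffordAlgebra Q)) : Set (CliffordAlgebra Q)) =
        ((TwoSidedIdeal.span
            (⇑(CliffordAlgebra.ι Q) '' (LinearMap.ker Q.polarBilin : Set V))) :
          Set (CliffordAlgebra Q)) :=
  stmt1_general h2 Q W hW
end

section
/- Let k be a field of characteristic ≠ 2, V a k-vector space of even finite dimension, and Q a quadratic form on V whose polar bilinear form b is nondegenerate. Then the Clifford algebra C(Q) is a central simple k-algebra: its only two-sided ideals are 0 and C(Q), and its center is k·1. -/
/-!
Choose an orthogonal basis `v` of `V`: the generators `eᵢ = ι(vᵢ)` of `C(Q)` pairwise anticommute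
and square to the nonzero scalars `aᵢ = Q(vᵢ)`.
Conjugation by `eᵢ` scales a monomial `e_{l₁} ⋯ e_{lₘ}` by `(-1)^(m + #{j | lⱼ = i})`, so, `2` being
invertible, a common eigenvector of these conjugations lies in the span of the monomials with the
same signs. On a monomial where all signs are `+1`, every index occurs `≡ m` times mod 2; summing
over the `n` indices gives `m ≡ n m ≡ 0`, so every index occurs an even number of times and the
monomial is a scalar. Hence central elements are scalars. A nonzero two-sided ideal is stable under
the commuting involutions, so it contains a common eigenvector `x ≠ 0`; for a monomial `μ` with the
same signs, `x μ` is fixed by every conjugation, hence a scalar, and it is nonzero because `μ` is a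
unit.
-/

namespace AnticommutingGenerators

open Submodule

variable {k A ι : Type*} [Field k] [Ring A] [Algebra k A]

def mon (e : ι → A) (l : List ι) : A := (l.map e).prod

@[simp] lemma mon_nil (e : ι → A) : mon e [] = 1 := rfl

@[simp] lemma mon_cons (e : ι → A) (i : ι) (l : List ι) : mon e (i :: l) = e i * mon e l :=
  List.prod_cons

@[simp] lemma mon_append (e : ι → A) (l l' : List ι) : mon e (l ++ l') = mon e l * mon e l' := by
  simp [mon]

variable (k) in
lemma span_range_mon (e : ι → A) :
    span k (Set.range (mon e)) = Subalgebra.toSubmodule (Algebra.adjoin k (Set.range e)) := by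
  rw [Algebra.adjoin_eq_span, ← FreeMonoid.mrange_lift, MonoidHom.coe_mrange]
  congr 1
  ext x
  simpa [FreeMonoid.lift_apply, mon] using FreeMonoid.toList.surjective.exists

lemma span_range_mon_eq_top {e : ι → A} (hgen : Algebra.adjoin k (Set.range e) = ⊤) :
    span k (Set.range (mon e)) = ⊤ := by
  rw [span_range_mon, hgen, Algebra.top_toSubmodule]

variable (e : ι → A) (a : ι → k) in
noncomputable def conj (i : ι) : A →ₗ[k] A :=
  (a i)⁻¹ • (LinearMap.mulRight k (e i) ∘ₗ LinearMap.mulLeft k (e i))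

lemma conj_apply (e : ι → A) (a : ι → k) (i : ι) (x : A) :
    conj e a i x = (a i)⁻¹ • (e i * x * e i) := rfl

lemma conj_mem {e : ι → A} {a : ι → k} {I : TwoSidedIdeal A} {x : A} (hx : x ∈ I) (i : ι) :
    conj e a i x ∈ I := by
  rw [conj_apply, Algebra.smul_def]
  exact I.mul_mem_left _ _ (I.mul_mem_right _ _ (I.mul_mem_left _ _ hx))

lemma isUnit_mon {e : ι → A} {a : ι → k} (hsq : ∀ i, e i * e i = algebraMap k A (a i))
    (ha : ∀ i, a i ≠ 0) (l : List ι) : IsUnit (mon e l) :=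
  List.prod_isUnit <| List.forall_mem_map.mpr fun i _ =>
    (isUnit_pow_iff (a := e i) two_ne_zero).mp <| by
      rw [sq, hsq]; exact (isUnit_iff_ne_zero.mpr (ha i)).map _

lemma conj_mul {e : ι → A} {a : ι → k} (hsq : ∀ i, e i * e i = algebraMap k A (a i))
    (ha : ∀ i, a i ≠ 0) (i : ι) (x y : A) :
    conj e a i (x * y) = conj e a i x * conj e a i y := by
  have : e i * x * e i * (e i * y * e i) = a i • (e i * (x * y) * e i) := by
    simp only [mul_assoc]
    rw [← mul_assoc (e i) (e i), hsq, ← Algebra.smul_def, mul_smul_comm, mul_smul_comm]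
  rw [conj_apply, conj_apply, conj_apply, smul_mul_smul_comm, this, smul_smul,
    show (a i)⁻¹ * (a i)⁻¹ * a i = (a i)⁻¹ by field_simp [ha i]]

variable [DecidableEq ι]

variable (k) in
def sign (l : List ι) (i : ι) : k := (-1) ^ (l.length + l.count i)

lemma sign_mul_self (l : List ι) (i : ι) : sign k l i * sign k l i = 1 := by
  rw [sign, ← pow_add, Even.neg_one_pow ⟨_, rfl⟩]

lemma sign_cons_self (l : List ι) (i : ι) : sign k (i :: l) i = sign k l i := by
  simp only [sign, List.length_cons, List.count_cons_self]
  ring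

lemma sign_cons_of_ne (l : List ι) {i j : ι} (h : j ≠ i) : sign k (j :: l) i = -sign k l i := by
  simp only [sign, List.length_cons, List.count_cons_of_ne h]
  ring

lemma even_count_of_sign_eq_one [Fintype ι] (hcard : Even (Fintype.card ι)) (h2 : (2 : k) ≠ 0)
    {l : List ι} (hl : sign k l = 1) (i : ι) : Even (l.count i) := by
  have hneg : (-1 : k) ≠ 1 := fun h => h2 (by linear_combination -h)
  have hcount (j : ι) : (l.count j : ZMod 2) = l.length := by
    have := (neg_one_pow_eq_one_iff_even hneg).mp (congrFun hl j)
    rw [← ZMod.natCast_eq_zero_iff_even, Nat.cast_add, add_eq_zero_iff_eq_neg,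
      ZMod.neg_eq_self_mod_two] at this
    exact this.symm
  have hsum : ∑ j, l.count j = l.length := by
    simpa using Multiset.sum_count_eq_card (s := Finset.univ) (m := (l : Multiset ι)) (by simp)
  have hlen : (l.length : ZMod 2) = 0 :=
    calc (l.length : ZMod 2) = ∑ j, (l.count j : ZMod 2) := by rw [← hsum, Nat.cast_sum]
      _ = Fintype.card ι • (l.length : ZMod 2) := by simp [hcount]
      _ = 0 := by rw [nsmul_eq_mul, (ZMod.natCast_eq_zero_iff_even).mpr hcard, zero_mul]
  rw [← ZMod.natCast_eq_zero_iff_even, hcount, hlen]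

section Anticomm

variable {e : ι → A} (hanti : Pairwise fun i j => e i * e j = -(e j * e i))
include hanti

lemma mul_mon (i : ι) (l : List ι) : e i * mon e l = sign k l i • (mon e l * e i) := by
  induction l with
  | nil => simp [sign]
  | cons j l ih =>
    rcases eq_or_ne j i with rfl | hji
    · rw [mon_cons, sign_cons_self, mul_assoc, ih, mul_smul_comm]
    · rw [mon_cons, ← mul_assoc, hanti hji.symm, neg_mul, mul_assoc, ih, mul_smul_comm,
        sign_cons_of_ne _ hji, neg_smul, mul_assoc]

lemma mon_mem_bot_of_even_count {a : ι → k} (hsq : ∀ i, e i * e i = algebraMap k A (a i))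
    {l : List ι} (hl : ∀ i, Even (l.count i)) : mon e l ∈ (⊥ : Subalgebra k A) := by
  induction hlen : l.length using Nat.strong_induction_on generalizing l with
  | _ m ih =>
  cases l with
  | nil => exact one_mem _
  | cons i t =>
    have hit : i ∈ t := by
      have := hl i
      rw [List.count_cons_self, Nat.even_add_one] at this
      exact List.count_pos_iff.mp (Nat.pos_of_ne_zero fun h => this (h ▸ .zero))
    obtain ⟨t₁, t₂, rfl⟩ := List.append_of_mem hit
    have hmon : mon e (i :: (t₁ ++ i :: t₂)) = (sign k t₁ i * a i) • mon e (t₁ ++ t₂) := by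
      rw [mon_cons, mon_append, mon_cons, ← mul_assoc, mul_mon (k := k) hanti, smul_mul_assoc,
        mul_assoc, ← mul_assoc (e i), hsq, ← Algebra.smul_def, mul_smul_comm, smul_smul, mon_append]
    rw [hmon]
    refine Subalgebra.smul_mem _ (ih _ ?_ (fun j => ?_) rfl) _
    · simp [← hlen]
    · have := hl j
      simp only [List.count_cons, List.count_append] at this ⊢
      split_ifs at this <;> grind

variable {a : ι → k} (hsq : ∀ i, e i * e i = algebraMap k A (a i)) (ha : ∀ i, a i ≠ 0)
include hsq ha

lemma conj_mon (i : ι) (l : List ι) : conj e a i (mon e l) = sign k l i • mon e l := by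
  rw [conj_apply, mul_mon (k := k) hanti, smul_mul_assoc, mul_assoc, hsq, ← Algebra.commutes,
    ← Algebra.smul_def, smul_smul, smul_smul, mul_right_comm, inv_mul_cancel₀ (ha i), one_mul]

lemma add_smul_conj_mem_span {Λ : Set (List ι)} {x : A} (hx : x ∈ span k (mon e '' Λ)) (i : ι)
    {s : k} (hs : s * s = 1) :
    x + s • conj e a i x ∈ span k (mon e '' {l ∈ Λ | sign k l i = s}) := by
  suffices span k (mon e '' Λ) ≤
      (span k (mon e '' {l ∈ Λ | sign k l i = s})).comap (LinearMap.id + s • conj e a i) from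
    this hx
  refine span_le.mpr ?_
  rintro _ ⟨l, hl, rfl⟩
  simp only [SetLike.mem_coe, mem_comap, LinearMap.add_apply, LinearMap.id_apply,
    LinearMap.smul_apply, conj_mon hanti hsq ha, smul_smul]
  by_cases hsl : sign k l i = s
  · have hmem : mon e l ∈ span k (mon e '' {l ∈ Λ | sign k l i = s}) :=
      subset_span ⟨l, ⟨hl, hsl⟩, rfl⟩
    exact add_mem hmem (smul_mem _ _ hmem)
  · have hsq' : (sign k l i + s) * (sign k l i - s) = 0 := by
      linear_combination sign_mul_self (k := k) l i - hs
    have hneg := (mul_eq_zero.mp hsq').resolve_right (sub_ne_zero.mpr hsl)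
    rw [show s * sign k l i = -1 by linear_combination s * hneg - hs, neg_smul, one_smul,
      add_neg_cancel]
    exact zero_mem _

variable (hspan : span k (Set.range (mon e)) = ⊤)
include hspan

lemma conj_conj (i : ι) (x : A) : conj e a i (conj e a i x) = x := by
  refine LinearMap.congr_fun (LinearMap.ext_on_range (f := conj e a i ∘ₗ conj e a i)
    (g := LinearMap.id) hspan fun l => ?_) x
  simp [conj_mon hanti hsq ha, smul_smul, sign_mul_self]

lemma conj_comm (i j : ι) (x : A) : conj e a i (conj e a j x) = conj e a j (conj e a i x) := by
  refine LinearMap.congr_fun (LinearMap.ext_on_range (f := conj e a i ∘ₗ conj e a j)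
    (g := conj e a j ∘ₗ conj e a i) hspan fun l => ?_) x
  simp [conj_mon hanti hsq ha, smul_smul, mul_comm]

variable [Fintype ι] (h2 : (2 : k) ≠ 0)
include h2

lemma mem_span_sign_eq {s : ι → k} (hs : ∀ i, s i * s i = 1) {x : A}
    (hx : ∀ i, conj e a i x = s i • x) : x ∈ span k (mon e '' {l | sign k l = s}) := by
  suffices ∀ S : Finset ι, x ∈ span k (mon e '' {l | ∀ i ∈ S, sign k l i = s i}) by
    simpa [funext_iff] using this Finset.univ
  intro S
  induction S using Finset.induction_on with
  | empty => simp [hspan]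
  | insert j S _ ih =>
    have h := add_smul_conj_mem_span hanti hsq ha ih j (hs j)
    rw [hx, smul_smul, hs, one_smul, ← two_smul k x] at h
    have hset : {l | ∀ i ∈ insert j S, sign k l i = s i} =
        {l ∈ {l | ∀ i ∈ S, sign k l i = s i} | sign k l j = s j} := by
      ext l
      simp [and_comm]
    rw [hset, show x = (2 : k)⁻¹ • (2 : k) • x by rw [smul_smul, inv_mul_cancel₀ h2, one_smul]]
    exact smul_mem _ _ h

lemma mem_bot_of_conj_eq_self (hcard : Even (Fintype.card ι)) {x : A}
    (hx : ∀ i, conj e a i x = x) : x ∈ (⊥ : Subalgebra k A) := by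
  have hx1 := mem_span_sign_eq hanti hsq ha hspan h2 (s := 1) (by simp) (by simpa using hx)
  refine (span_le.mpr ?_ hx1 : x ∈ Subalgebra.toSubmodule ⊥)
  rintro _ ⟨l, hl, rfl⟩
  exact mon_mem_bot_of_even_count hanti hsq (even_count_of_sign_eq_one hcard h2 hl)

lemma exists_mem_ne_zero_forall_conj_eq_smul {I : TwoSidedIdeal A} (hI : I ≠ ⊥) :
    ∃ x ∈ I, x ≠ 0 ∧ ∀ i, ∃ σ : k, σ * σ = 1 ∧ conj e a i x = σ • x := by
  suffices ∀ S : Finset ι, ∃ x ∈ I, x ≠ 0 ∧ ∀ i ∈ S, ∃ σ : k, σ * σ = 1 ∧ conj e a i x = σ • x by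
    simpa using this Finset.univ
  intro S
  induction S using Finset.induction_on with
  | empty =>
    obtain ⟨x, hxI, hx0⟩ : ∃ x ∈ I, x ≠ 0 := by
      by_contra! h
      exact hI (eq_bot_iff.mpr fun x hx => (TwoSidedIdeal.mem_bot A).mpr (h x hx))
    exact ⟨x, hxI, hx0, by simp⟩
  | insert j S _ ih =>
    obtain ⟨x, hxI, hx0, hxS⟩ := ih
    obtain ⟨σ, hσ, hy0⟩ : ∃ σ : k, σ * σ = 1 ∧ x + σ • conj e a j x ≠ 0 := by
      by_contra! h
      have h2x : (2 : k) • x = 0 :=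
        calc (2 : k) • x = (x + (1 : k) • conj e a j x) + (x + (-1 : k) • conj e a j x) := by
              simp only [one_smul, neg_smul, two_smul]; abel
          _ = 0 := by rw [h 1 (one_mul 1), h (-1) (by norm_num), add_zero]
      exact hx0 ((smul_eq_zero.mp h2x).resolve_left h2)
    refine ⟨x + σ • conj e a j x, I.add_mem hxI ?_, hy0, fun i hi => ?_⟩
    · rw [Algebra.smul_def]
      exact I.mul_mem_left _ _ (conj_mem hxI j)
    rcases Finset.mem_insert.mp hi with rfl | hi
    · refine ⟨σ, hσ, ?_⟩
      rw [map_add, map_smul, conj_conj hanti hsq ha hspan, smul_add, smul_smul, hσ, one_smul,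
        add_comm]
    · obtain ⟨τ, hτ, hxτ⟩ := hxS i hi
      refine ⟨τ, hτ, ?_⟩
      rw [map_add, map_smul, conj_comm hanti hsq ha hspan, hxτ, map_smul, smul_add, smul_comm]

end Anticomm

variable [Fintype ι] {e : ι → A} {a : ι → k} (hanti : Pairwise fun i j => e i * e j = -(e j * e i))
  (hsq : ∀ i, e i * e i = algebraMap k A (a i)) (ha : ∀ i, a i ≠ 0)
  (hgen : Algebra.adjoin k (Set.range e) = ⊤) (hcard : Even (Fintype.card ι)) (h2 : (2 : k) ≠ 0)
include hanti hsq ha hgen hcard h2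

theorem center_eq_bot : Subalgebra.center k A = ⊥ := by
  have hspan := span_range_mon_eq_top hgen
  refine le_antisymm (fun x hx => mem_bot_of_conj_eq_self hanti hsq ha hspan h2 hcard fun i => ?_)
    bot_le
  rw [conj_apply, Subalgebra.mem_center_iff.mp hx (e i), mul_assoc, hsq, ← Algebra.commutes,
    ← Algebra.smul_def, smul_smul, inv_mul_cancel₀ (ha i), one_smul]

theorem eq_bot_or_eq_top (I : TwoSidedIdeal A) : I = ⊥ ∨ I = ⊤ := by
  have hspan := span_range_mon_eq_top hgen
  refine or_iff_not_imp_left.mpr fun hI => ?_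
  obtain ⟨x, hxI, hx0, hx⟩ := exists_mem_ne_zero_forall_conj_eq_smul hanti hsq ha hspan h2 hI
  choose s hs hxs using hx
  obtain ⟨l, rfl⟩ : ∃ l, sign k l = s := by
    by_contra! h
    have hx := mem_span_sign_eq hanti hsq ha hspan h2 hs hxs
    simp [h] at hx
    exact hx0 hx
  obtain ⟨c, hc⟩ := Algebra.mem_bot.mp <| mem_bot_of_conj_eq_self hanti hsq ha hspan h2 hcard
    (x := x * mon e l) fun i => by
      rw [conj_mul hsq ha, hxs, conj_mon hanti hsq ha, smul_mul_smul_comm, sign_mul_self, one_smul]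
  have hc0 : c ≠ 0 := by
    rintro rfl
    exact hx0 ((isUnit_mon hsq ha l).mul_left_eq_zero.mp (by rw [← hc, map_zero]))
  have h1 : algebraMap k A c⁻¹ * (x * mon e l) ∈ I := I.mul_mem_left _ _ (I.mul_mem_right _ _ hxI)
  rwa [← hc, ← map_mul, inv_mul_cancel₀ hc0, map_one, TwoSidedIdeal.one_mem_iff] at h1

end AnticommutingGenerators

lemma CliffordAlgebra.adjoin_range_ι_basis {R M n : Type*} [CommRing R] [AddCommGroup M]
    [Module R M] (Q : QuadraticForm R M) (v : Module.Basis n R M) :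
    Algebra.adjoin R (Set.range fun i => ι Q (v i)) = ⊤ := by
  refine eq_top_iff.mpr (adjoin_range_ι (Q := Q) ▸ Algebra.adjoin_le ?_)
  rintro _ ⟨x, rfl⟩
  refine Algebra.span_le_adjoin R _ ?_
  rw [← Function.comp_def, Set.range_comp, Submodule.span_image, v.span_eq]
  exact Submodule.mem_map_of_mem Submodule.mem_top

lemma QuadraticMap.apply_basis_ne_zero {R M ι : Type*} [CommRing R] [Nontrivial R]
    [AddCommGroup M] [Module R M] {Q : QuadraticForm R M} (hQ : LinearMap.ker Q.polarBilin = ⊥)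
    {v : Module.Basis ι R M} (hv : Q.polarBilin.IsOrthoᵢ v) (i : ι) : Q (v i) ≠ 0 := by
  have := hv.not_isOrtho_basis_self_of_separatingLeft
    (LinearMap.separatingLeft_iff_ker_eq_bot.mpr hQ) i
  rw [polarBilin_apply_apply, polar_self] at this
  exact right_ne_zero_of_smul this

/-- Let `k` be a field of characteristic ≠ 2, `V` a `k`-vector space of
even finite dimension, and `Q` a quadratic form whose polar bilinear form is
nondegenerate.  Then `C(Q)` is a central simple `k`-algebra: its only two-sided ideals
are `0` and `C(Q)`, and its center is `k·1`. -/
theorem stmt12 {k V : Type*} [Field k] [AddCommGroup V] [Module k V]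
    [FiniteDimensional k V] (h2 : (2 : k) ≠ 0) (Q : QuadraticForm k V)
    (hdeven : Even (Module.finrank k V))
    (hnd : LinearMap.ker Q.polarBilin = ⊥) :
    (∀ I : TwoSidedIdeal (CliffordAlgebra Q), I = ⊥ ∨ I = ⊤) ∧
    Subalgebra.center k (CliffordAlgebra Q) = ⊥ := by
  have : Invertible (2 : k) := invertibleOfNonzero h2
  obtain ⟨v, hv⟩ := LinearMap.BilinForm.exists_orthogonal_basis (B := Q.polarBilin)
    ⟨QuadraticMap.polar_comm Q⟩
  have hanti : Pairwise fun i j => CliffordAlgebra.ι Q (v i) * CliffordAlgebra.ι Q (v j) =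
      -(CliffordAlgebra.ι Q (v j) * CliffordAlgebra.ι Q (v i)) := fun i j hij =>
    CliffordAlgebra.ι_mul_ι_comm_of_isOrtho (QuadraticMap.isOrtho_polarBilin.mp (hv hij))
  have hsq i := CliffordAlgebra.ι_sq_scalar Q (v i)
  have ha := QuadraticMap.apply_basis_ne_zero hnd hv
  have hgen := CliffordAlgebra.adjoin_range_ι_basis Q v
  have hcard : Even (Fintype.card (Fin (Module.finrank k V))) := by rwa [Fintype.card_fin]
  exact ⟨AnticommutingGenerators.eq_bot_or_eq_top hanti hsq ha hgen hcard h2,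
    AnticommutingGenerators.center_eq_bot hanti hsq ha hgen hcard h2⟩
end

section
/- Let k be a field of characteristic ≠ 2, V a finite-dimensional k-vector space, and Q a quadratic form on V whose polar bilinear form b is nondegenerate. Then the Clifford algebra C(Q) is simple as a superalgebra: every two-sided ideal I of C(Q) that is homogeneous with respect to the canonical ℤ/2-grading (i.e. for every a ∈ I, both the even and the odd component of a lie in I) is either 0 or all of C(Q). -/
/-!
A homogeneous two-sided ideal is stable under the contractions `b(v, -)⌋`, since on a homogeneous
element `x` such a contraction is `v x - (-1)^|x| x v`. Every element is annihilated by
sufficiently many successive contractions, so a nonzero element of the ideal contracts down to a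
nonzero element `y` of the ideal that all contractions kill. Over an anisotropic orthogonal basis
`e`, the operator `x ↦ b(eᵢ, eᵢ)⁻¹ b(eᵢ, -)⌋(eᵢ x)` fixes such a `y` and kills every monomial
containing `eᵢ`; applying it for all `i` shows that `y` is a nonzero scalar.
-/

namespace CliffordAlgebra

section CommRing

variable {R M κ : Type*} [CommRing R] [AddCommGroup M] [Module R M] {Q : QuadraticForm R M}

theorem contractLeft_polarBilin (v : M) (x : CliffordAlgebra Q) :
    contractLeft (Q.polarBilin v) x = ι Q v * x - involute x * ι Q v := by
  induction x using CliffordAlgebra.left_induction with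
  | algebraMap r => simp [Algebra.commutes]
  | add x y hx hy =>
      simp only [map_add, mul_add, add_mul, hx, hy]
      abel
  | ι_mul x m hx =>
      rw [contractLeft_ι_mul, hx, map_mul, involute_ι, QuadraticMap.polarBilin_apply_apply,
        ← mul_assoc, ι_mul_ι_comm, sub_mul, ← Algebra.smul_def]
      simp only [mul_sub, neg_mul, mul_assoc]
      abel

theorem contractLeft_polarBilin_mem {I : TwoSidedIdeal (CliffordAlgebra Q)}
    (hI : ∀ a ∈ I, ∀ i : ZMod 2,
      (DirectSum.decompose (evenOdd Q) a i : CliffordAlgebra Q) ∈ I)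
    {a : CliffordAlgebra Q} (ha : a ∈ I) (v : M) :
    contractLeft (Q.polarBilin v) a ∈ I := by
  classical
  rw [← DirectSum.sum_support_decompose (evenOdd Q) a, map_sum]
  refine sum_mem fun i _ => ?_
  have hai := hI a ha i
  have hmem := (DirectSum.decompose (evenOdd Q) a i).2
  rw [contractLeft_polarBilin]
  fin_cases i
  · rw [involute_eq_of_mem_even hmem]
    exact I.sub_mem (I.mul_mem_left _ _ hai) (I.mul_mem_right _ _ hai)
  · rw [involute_eq_of_mem_odd hmem, neg_mul, sub_neg_eq_add]
    exact I.add_mem (I.mul_mem_left _ _ hai) (I.mul_mem_right _ _ hai)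

variable (Q) in
def killedByContractLeft : ℕ → Submodule R (CliffordAlgebra Q)
  | 0 => ⊥
  | m + 1 => ⨅ d : Module.Dual R M, (killedByContractLeft m).comap (contractLeft d)

theorem mem_killedByContractLeft_succ {m : ℕ} {x : CliffordAlgebra Q} :
    x ∈ killedByContractLeft Q (m + 1) ↔ ∀ d, contractLeft d x ∈ killedByContractLeft Q m := by
  simp [killedByContractLeft, Submodule.mem_iInf]

theorem killedByContractLeft_le_succ :
    ∀ m, killedByContractLeft Q m ≤ killedByContractLeft Q (m + 1)
  | 0 => bot_le
  | m + 1 => fun _ hx => mem_killedByContractLeft_succ.2 fun d =>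
      killedByContractLeft_le_succ m (mem_killedByContractLeft_succ.1 hx d)

theorem ι_mul_mem_killedByContractLeft (v : M) :
    ∀ {m : ℕ} {x : CliffordAlgebra Q}, x ∈ killedByContractLeft Q m →
      ι Q v * x ∈ killedByContractLeft Q (m + 1)
  | 0, x, hx => by
    rw [(Submodule.mem_bot R).1 hx, mul_zero]
    exact zero_mem _
  | m + 1, x, hx => mem_killedByContractLeft_succ.2 fun d => by
    rw [contractLeft_ι_mul]
    exact sub_mem (Submodule.smul_mem _ _ hx)
      (ι_mul_mem_killedByContractLeft v (mem_killedByContractLeft_succ.1 hx d))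

theorem exists_mem_killedByContractLeft (x : CliffordAlgebra Q) :
    ∃ m, x ∈ killedByContractLeft Q m := by
  have hmono : Monotone (killedByContractLeft Q) :=
    monotone_nat_of_le_succ killedByContractLeft_le_succ
  induction x using CliffordAlgebra.left_induction with
  | algebraMap r =>
    refine ⟨1, mem_killedByContractLeft_succ.2 fun d => ?_⟩
    rw [contractLeft_algebraMap]
    exact zero_mem _
  | add x y hx hy =>
    obtain ⟨m, hm⟩ := hx
    obtain ⟨n, hn⟩ := hy
    exact ⟨max m n, add_mem (hmono (le_max_left m n) hm) (hmono (le_max_right m n) hn)⟩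
  | ι_mul x v hx =>
    obtain ⟨m, hm⟩ := hx
    exact ⟨m + 1, ι_mul_mem_killedByContractLeft v hm⟩

theorem exists_ne_zero_forall_contractLeft_eq_zero (δ : κ → Module.Dual R M)
    {S : Set (CliffordAlgebra Q)} (hS : ∀ i, ∀ y ∈ S, contractLeft (δ i) y ∈ S)
    {x : CliffordAlgebra Q} (hx : x ∈ S) (hx0 : x ≠ 0) :
    ∃ y ∈ S, y ≠ 0 ∧ ∀ i, contractLeft (δ i) y = 0 := by
  obtain ⟨m, hm⟩ := exists_mem_killedByContractLeft x
  induction m generalizing x with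
  | zero => exact absurd ((Submodule.mem_bot R).1 hm) hx0
  | succ m ih =>
    by_cases h : ∀ i, contractLeft (δ i) x = 0
    · exact ⟨x, hx, hx0, h⟩
    · obtain ⟨i, hi⟩ := not_forall.1 h
      exact ih (hS i x hx) hi (mem_killedByContractLeft_succ.1 hm (δ i))

variable (Q) in
def ιProd (e : κ → M) (l : List κ) : CliffordAlgebra Q :=
  (l.map fun i => ι Q (e i)).prod

@[simp]
theorem ιProd_nil (e : κ → M) : ιProd Q e [] = 1 := rfl

@[simp]
theorem ιProd_cons (e : κ → M) (i : κ) (l : List κ) :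
    ιProd Q e (i :: l) = ι Q (e i) * ιProd Q e l := rfl

variable {e : κ → M}

theorem contractLeft_ιProd_of_notMem (he : Q.polarBilin.IsOrthoᵢ e) {i : κ} {l : List κ}
    (h : i ∉ l) : contractLeft (Q.polarBilin (e i)) (ιProd Q e l) = 0 := by
  induction l with
  | nil => simp
  | cons j l ih =>
    rw [List.mem_cons, not_or] at h
    rw [ιProd_cons, contractLeft_ι_mul, ih h.2, he h.1, zero_smul, mul_zero, sub_zero]

theorem ι_mul_ιProd_of_mem [DecidableEq κ] (he : Q.polarBilin.IsOrthoᵢ e) {i : κ} {l : List κ}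
    (h : i ∈ l) :
    ∃ u : R, ι Q (e i) * ιProd Q e l = u • ιProd Q e (l.erase i) := by
  induction l with
  | nil => exact absurd h List.not_mem_nil
  | cons j l ih =>
    rcases eq_or_ne i j with rfl | hij
    · refine ⟨Q (e i), ?_⟩
      rw [ιProd_cons, ← mul_assoc, ι_sq_scalar, List.erase_cons_head, ← Algebra.smul_def]
    · obtain ⟨u, hu⟩ := ih ((List.mem_cons.1 h).resolve_left hij)
      refine ⟨-u, ?_⟩
      rw [ιProd_cons, ← mul_assoc,
        ι_mul_ι_comm_of_isOrtho (QuadraticMap.isOrtho_polarBilin.1 (he hij)), neg_mul,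
        mul_assoc, hu, List.erase_cons_tail (by simpa using hij.symm), ιProd_cons,
        mul_smul_comm, neg_smul]

end CommRing

section Field

variable {k V κ : Type*} [Field k] [AddCommGroup V] [Module k V] {Q : QuadraticForm k V}
  {e : κ → V}

variable (Q) in
/-- For an orthogonal family `e` with `b(eᵢ, eᵢ) ≠ 0`, the projection onto the span of the
monomials `ιProd Q e l` (`l` without repetitions) with `i ∉ l`, along those with `i ∈ l`. -/
noncomputable def avoidingProj (e : κ → V) (i : κ) :
    CliffordAlgebra Q →ₗ[k] CliffordAlgebra Q :=
  (Q.polarBilin (e i) (e i))⁻¹ •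
    (contractLeft (Q.polarBilin (e i)) ∘ₗ LinearMap.mulLeft k (ι Q (e i)))

theorem avoidingProj_apply_of_contractLeft_eq_zero {i : κ} (hQ : Q.polarBilin (e i) (e i) ≠ 0)
    {y : CliffordAlgebra Q} (hy : contractLeft (Q.polarBilin (e i)) y = 0) :
    avoidingProj Q e i y = y := by
  rw [avoidingProj, LinearMap.smul_apply, LinearMap.comp_apply, LinearMap.mulLeft_apply,
    contractLeft_ι_mul, hy, mul_zero, sub_zero, smul_smul, inv_mul_cancel₀ hQ, one_smul]

theorem avoidingProj_ιProd_of_mem [DecidableEq κ] (he : Q.polarBilin.IsOrthoᵢ e) {i : κ}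
    {l : List κ} (hl : l.Nodup) (h : i ∈ l) : avoidingProj Q e i (ιProd Q e l) = 0 := by
  obtain ⟨u, hu⟩ := ι_mul_ιProd_of_mem he h
  rw [avoidingProj, LinearMap.smul_apply, LinearMap.comp_apply, LinearMap.mulLeft_apply, hu,
    map_smul, contractLeft_ιProd_of_notMem he hl.not_mem_erase, smul_zero, smul_zero]

variable (Q) in
def ιProdSpanAvoiding (e : κ → V) (S : Set κ) : Submodule k (CliffordAlgebra Q) :=
  Submodule.span k {x | ∃ l : List κ, l.Nodup ∧ (∀ j ∈ l, j ∉ S) ∧ ιProd Q e l = x}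

theorem ι_mul_mem_ιProdSpanAvoiding_empty [DecidableEq κ] (he : Q.polarBilin.IsOrthoᵢ e)
    (i : κ) {x : CliffordAlgebra Q} (hx : x ∈ ιProdSpanAvoiding Q e ∅) :
    ι Q (e i) * x ∈ ιProdSpanAvoiding Q e ∅ := by
  induction hx using Submodule.span_induction with
  | mem y hy =>
    obtain ⟨l, hl, -, rfl⟩ := hy
    by_cases hi : i ∈ l
    · obtain ⟨u, hu⟩ := ι_mul_ιProd_of_mem he hi
      rw [hu]
      exact Submodule.smul_mem _ _ (Submodule.subset_span ⟨_, hl.erase i, by simp, rfl⟩)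
    · exact Submodule.subset_span ⟨i :: l, List.nodup_cons.2 ⟨hi, hl⟩, by simp, rfl⟩
  | zero => rw [mul_zero]; exact zero_mem _
  | add y z _ _ hy hz => rw [mul_add]; exact add_mem hy hz
  | smul r y _ hy => rw [mul_smul_comm]; exact Submodule.smul_mem _ _ hy

theorem ιProdSpanAvoiding_empty [DecidableEq κ] (he : Q.polarBilin.IsOrthoᵢ e)
    (hspan : Submodule.span k (Set.range e) = ⊤) : ιProdSpanAvoiding Q e ∅ = ⊤ := by
  refine Submodule.eq_top_iff'.2 fun x => ?_
  induction x using CliffordAlgebra.left_induction with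
  | algebraMap r =>
    rw [Algebra.algebraMap_eq_smul_one]
    exact Submodule.smul_mem _ _ (Submodule.subset_span ⟨[], List.nodup_nil, by simp, rfl⟩)
  | add x y hx hy => exact add_mem hx hy
  | ι_mul x v hx =>
    have hv : v ∈ Submodule.span k (Set.range e) := hspan ▸ Submodule.mem_top
    induction hv using Submodule.span_induction with
    | mem w hw =>
      obtain ⟨i, rfl⟩ := hw
      exact ι_mul_mem_ιProdSpanAvoiding_empty he i hx
    | zero => rw [map_zero, zero_mul]; exact zero_mem _
    | add w w' _ _ hw hw' => rw [map_add, add_mul]; exact add_mem hw hw'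
    | smul r w _ hw => rw [map_smul, smul_mul_assoc]; exact Submodule.smul_mem _ _ hw

theorem map_avoidingProj_le [DecidableEq κ] (he : Q.polarBilin.IsOrthoᵢ e) {i : κ}
    (hQ : Q.polarBilin (e i) (e i) ≠ 0) (S : Set κ) :
    (ιProdSpanAvoiding Q e S).map (avoidingProj Q e i) ≤ ιProdSpanAvoiding Q e (insert i S) := by
  rw [ιProdSpanAvoiding, Submodule.map_span_le]
  rintro _ ⟨l, hl, hlS, rfl⟩
  by_cases hi : i ∈ l
  · rw [avoidingProj_ιProd_of_mem he hl hi]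
    exact zero_mem _
  · rw [avoidingProj_apply_of_contractLeft_eq_zero hQ (contractLeft_ιProd_of_notMem he hi)]
    refine Submodule.subset_span ⟨l, hl, fun j hj => ?_, rfl⟩
    rintro (rfl | hjS)
    exacts [hi hj, hlS j hj hjS]

theorem mem_range_algebraMap_of_forall_contractLeft_eq_zero [Fintype κ]
    (he : Q.polarBilin.IsOrthoᵢ e) (hQ : ∀ i, Q.polarBilin (e i) (e i) ≠ 0)
    (hspan : Submodule.span k (Set.range e) = ⊤) {y : CliffordAlgebra Q}
    (hy : ∀ i, contractLeft (Q.polarBilin (e i)) y = 0) :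
    y ∈ Set.range (algebraMap k (CliffordAlgebra Q)) := by
  classical
  have hmem : ∀ S : Finset κ, y ∈ ιProdSpanAvoiding Q e S := by
    intro S
    induction S using Finset.induction_on with
    | empty => simp [ιProdSpanAvoiding_empty he hspan]
    | insert i S _ ih =>
      rw [Finset.coe_insert, ← avoidingProj_apply_of_contractLeft_eq_zero (hQ i) (hy i)]
      exact map_avoidingProj_le he (hQ i) S ⟨y, ih, rfl⟩
  have hscalar : ιProdSpanAvoiding Q e (Finset.univ : Finset κ) ≤ k ∙ 1 := by
    rw [ιProdSpanAvoiding, Submodule.span_le]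
    rintro _ ⟨l, -, hl, rfl⟩
    rw [List.eq_nil_iff_forall_not_mem.2 fun j hj => hl j hj (Finset.mem_coe.2 (Finset.mem_univ _))]
    exact Submodule.mem_span_singleton_self 1
  obtain ⟨r, hr⟩ := Submodule.mem_span_singleton.1 (hscalar (hmem Finset.univ))
  exact ⟨r, by rw [Algebra.algebraMap_eq_smul_one, hr]⟩

theorem mem_range_algebraMap_of_forall_contractLeft_polarBilin_eq_zero [FiniteDimensional k V]
    (h2 : (2 : k) ≠ 0) (hnd : LinearMap.ker Q.polarBilin = ⊥) {y : CliffordAlgebra Q}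
    (hy : ∀ v, contractLeft (Q.polarBilin v) y = 0) :
    y ∈ Set.range (algebraMap k (CliffordAlgebra Q)) := by
  have : Invertible (2 : k) := invertibleOfNonzero h2
  obtain ⟨b, hb⟩ := LinearMap.BilinForm.exists_orthogonal_basis
    (B := Q.polarBilin) ⟨fun u v => QuadraticMap.polar_comm Q u v⟩
  exact mem_range_algebraMap_of_forall_contractLeft_eq_zero hb
    (hb.not_isOrtho_basis_self_of_separatingLeft (LinearMap.separatingLeft_iff_ker_eq_bot.2 hnd))
    b.span_eq fun i => hy (b i)

end Field

end CliffordAlgebra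

open CliffordAlgebra

/-- Let `k` be a field of characteristic ≠ 2, `V` a finite-dimensional
`k`-vector space, and `Q` a quadratic form whose polar bilinear form is nondegenerate.
Then `C(Q)` is simple as a superalgebra: every two-sided ideal that is homogeneous for
the canonical `ℤ/2`-grading is `0` or all of `C(Q)`. -/
theorem stmt13 {k V : Type*} [Field k] [AddCommGroup V] [Module k V]
    [FiniteDimensional k V] (h2 : (2 : k) ≠ 0) (Q : QuadraticForm k V)
    (hnd : LinearMap.ker Q.polarBilin = ⊥) :
    ∀ I : TwoSidedIdeal (CliffordAlgebra Q),
      (∀ a ∈ I, ∀ i : ZMod 2,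
        (DirectSum.decompose (CliffordAlgebra.evenOdd Q) a i : CliffordAlgebra Q) ∈ I) →
      I = ⊥ ∨ I = ⊤ := by
  intro I hI
  refine or_iff_not_imp_left.2 fun hbot => ?_
  obtain ⟨x, hxI, hx0⟩ : ∃ x ∈ I, x ≠ 0 := by
    by_contra! h
    exact hbot (eq_bot_iff.2 fun x hx => (TwoSidedIdeal.mem_bot _).2 (h x hx))
  obtain ⟨y, hyI, hy0, hy⟩ := exists_ne_zero_forall_contractLeft_eq_zero Q.polarBilin
    (fun v _ ha => contractLeft_polarBilin_mem hI ha v) hxI hx0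
  obtain ⟨r, rfl⟩ := mem_range_algebraMap_of_forall_contractLeft_polarBilin_eq_zero h2 hnd hy
  have hr : r ≠ 0 := by
    rintro rfl
    exact hy0 (map_zero _)
  refine I.eq_top ?_
  simpa [← map_mul, inv_mul_cancel₀ hr] using I.mul_mem_left (algebraMap k _ r⁻¹) _ hyI
end
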